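/- arXiv:1312.1731 — 2 statements merged into one kernel-verified Lean document; each statement's English description precedes it below -/
import Mathlib

section
/- Let $(\Gamma, \mathcal{G}, \pi)$ be a standard Borel probability space, $m, n$ positive integers, $\kappa_1, \kappa_2 : \Gamma \to \mathbb{R}^{m \times n}$ square-integrable, and $c : \Gamma \to \mathbb{R}^{m}$ integrable. For $v \in \mathbb{R}^{m}$ define the relaxed value $L^{r}(v) = \inf \tfrac12 \int(\|z_1\|^2+\|z_2\|^2)\,dP$ over all probability measures $P$ on $\mathbb{R}^{n}\times\mathbb{R}^{n}\times\Gamma$ with $\Gamma$-marginal $\pi$, finite second moments in $(z_1,z_2)$, and $\int (c(\gamma)+\kappa_1(\gamma)z_1+\kappa_2(\gamma)z_2)\,dP = v$; and the ordinary value $L^{o}(v) = \inf \tfrac12 \mathrm{E}^{\pi}[\|u_1\|^2+\|u_2\|^2]$ over all $u_1,u_2 \in L^2(\pi;\mathbb{R}^{n})$ with $\mathrm{E}^{\pi}[c + \kappa_1 u_1 + \kappa_2 u_2] = v$. Then $L^{r}(v) = L^{o}(v)$. -/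
/-!
The ordinary problem embeds in the relaxed one through `γ ↦ δ_{(u₁ γ, u₂ γ)} ⊗ π`, so
`L^r ≤ L^o`. For the converse write `K = [κ₁ κ₂]` and `G = E^π[K Kᵀ]`, and let `d = v - E^π c`.
If some relaxed control has mean drift `v`, then `d` is orthogonal to `ker G` (on that kernel
`Kᵀ w = 0` a.s.), so `G η = d` for a Lagrange multiplier `η`. Integrating the pointwise bound
`2 ⟪Kᵀη, z⟫ - ‖Kᵀη‖² ≤ ‖z‖²` against any feasible `P` gives `∫ ‖z‖² dP ≥ 2 η ⬝ d - η ⬝ G η = η ⬝ d`,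
and the ordinary feedback control `u = Kᵀη` attains this value. Both infima are `½ η ⬝ d`.
-/

open MeasureTheory Matrix

theorem Matrix.IsHermitian.exists_mulVec_eq_of_dotProduct_eq_zero {ρ : Type*} [Fintype ρ]
    [DecidableEq ρ] {A : Matrix ρ ρ ℝ} (hA : A.IsHermitian) {d : ρ → ℝ}
    (hd : ∀ w, A *ᵥ w = 0 → w ⬝ᵥ d = 0) : ∃ x, A *ᵥ x = d := by
  have hrange : LinearMap.range A.toEuclideanLin = (LinearMap.ker A.toEuclideanLin)ᗮ := by
    rw [← (isSymmetric_toEuclideanLin_iff.mpr hA).orthogonal_range,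
      Submodule.orthogonal_orthogonal]
  have hmem : WithLp.toLp 2 d ∈ LinearMap.range A.toEuclideanLin := by
    rw [hrange]
    intro w hw
    have hw' : A *ᵥ w.ofLp = 0 := by simpa using congrArg WithLp.ofLp hw
    simpa [EuclideanSpace.inner_eq_star_dotProduct, dotProduct_comm] using hd _ hw'
  obtain ⟨x, hx⟩ := hmem
  exact ⟨x.ofLp, by simpa using congrArg WithLp.ofLp hx⟩

theorem two_mul_dotProduct_sub_le {ι : Type*} [Fintype ι] (a b : ι → ℝ) :
    2 * (a ⬝ᵥ b) - a ⬝ᵥ a ≤ b ⬝ᵥ b := by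
  have h : 0 ≤ (b - a) ⬝ᵥ (b - a) := by simpa using dotProduct_star_self_nonneg (b - a)
  simp only [sub_dotProduct, dotProduct_sub, dotProduct_comm b a] at h
  linarith

theorem sumElim_dotProduct_self {ι : Type*} [Fintype ι] (a b : ι → ℝ) :
    Sum.elim a b ⬝ᵥ Sum.elim a b = ∑ i, a i ^ 2 + ∑ i, b i ^ 2 := by
  simp [dotProduct, sq]

section Integrals

variable {X ι ρ : Type*} [MeasurableSpace X] {μ : Measure X}

theorem integrable_dotProduct [Fintype ι] {a b : X → ι → ℝ}
    (ha : ∀ j, MemLp (fun x => a x j) 2 μ) (hb : ∀ j, MemLp (fun x => b x j) 2 μ) :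
    Integrable (fun x => a x ⬝ᵥ b x) μ :=
  integrable_finsetSum _ fun j _ => (ha j).integrable_mul (hb j)

theorem memLp_vecMul_apply [Fintype ρ] {A : X → Matrix ρ ι ℝ}
    (hA : ∀ i j, MemLp (fun x => A x i j) 2 μ) (w : ρ → ℝ) (j : ι) :
    MemLp (fun x => (w ᵥ* A x) j) 2 μ :=
  memLp_finsetSum _ fun i _ => (hA i j).const_mul (w i)

theorem memLp_two_of_integrable_dotProduct_self [Fintype ι] {z : X → ι → ℝ}
    (hz : ∀ j, AEStronglyMeasurable (fun x => z x j) μ)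
    (hzz : Integrable (fun x => z x ⬝ᵥ z x) μ) (j : ι) : MemLp (fun x => z x j) 2 μ := by
  refine (memLp_two_iff_integrable_sq (hz j)).2 <| hzz.mono' ((hz j).pow 2) <|
    Filter.Eventually.of_forall fun x => ?_
  rw [Real.norm_of_nonneg (sq_nonneg _), sq]
  exact Finset.single_le_sum (f := fun j => z x j * z x j) (fun j _ => mul_self_nonneg _)
    (Finset.mem_univ j)

theorem integral_dotProduct_const [Fintype ρ] {f : X → ρ → ℝ}
    (hf : ∀ i, Integrable (fun x => f x i) μ) (w : ρ → ℝ) :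
    (fun i => ∫ x, f x i ∂μ) ⬝ᵥ w = ∫ x, f x ⬝ᵥ w ∂μ := by
  simp only [dotProduct, ← integral_mul_const]
  exact (integral_finsetSum _ fun i _ => (hf i).mul_const (w i)).symm

theorem dotProduct_integral_mulVec [Fintype ι] [Fintype ρ] {A : X → Matrix ρ ι ℝ}
    {z : X → ι → ℝ} (hA : ∀ i j, MemLp (fun x => A x i j) 2 μ)
    (hz : ∀ j, MemLp (fun x => z x j) 2 μ)
    (w : ρ → ℝ) : w ⬝ᵥ (fun i => ∫ x, (A x *ᵥ z x) i ∂μ) = ∫ x, (w ᵥ* A x) ⬝ᵥ z x ∂μ := by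
  rw [dotProduct_comm, integral_dotProduct_const (f := fun x i => (A x *ᵥ z x) i)
    (fun i => integrable_dotProduct (hA i) hz)]
  simp_rw [dotProduct_comm _ w, dotProduct_mulVec]

end Integrals

section Gram

variable {Γ ι ρ : Type*} [MeasurableSpace Γ] {π : Measure Γ} [Fintype ι]
  {K : Γ → Matrix ρ ι ℝ}

noncomputable def gramMatrix (π : Measure Γ) (K : Γ → Matrix ρ ι ℝ) : Matrix ρ ρ ℝ :=
  Matrix.of fun i k => ∫ γ, K γ i ⬝ᵥ K γ k ∂π

theorem gramMatrix_isHermitian : (gramMatrix π K).IsHermitian :=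
  IsHermitian.ext fun i k => by simp [gramMatrix, dotProduct_comm]

theorem gramMatrix_mulVec [Fintype ρ] (hK : ∀ i j, MemLp (fun γ => K γ i j) 2 π) (w : ρ → ℝ) :
    gramMatrix π K *ᵥ w = fun i => ∫ γ, (K γ *ᵥ (w ᵥ* K γ)) i ∂π := by
  ext i
  simp_rw [← mulVec_transpose, mulVec_mulVec]
  exact integral_dotProduct_const (fun k => integrable_dotProduct (hK i) (hK k)) w

theorem dotProduct_gramMatrix_mulVec [Fintype ρ] (hK : ∀ i j, MemLp (fun γ => K γ i j) 2 π)
    (w : ρ → ℝ) :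
    w ⬝ᵥ (gramMatrix π K *ᵥ w) = ∫ γ, (w ᵥ* K γ) ⬝ᵥ (w ᵥ* K γ) ∂π := by
  rw [gramMatrix_mulVec hK, dotProduct_integral_mulVec hK (memLp_vecMul_apply hK w)]

end Gram

section Duality

variable {X Γ ι ρ : Type*} [MeasurableSpace X] [MeasurableSpace Γ] [Fintype ι] [Fintype ρ]
  {μ : Measure X} {π : Measure Γ} {g : X → Γ} {K : Γ → Matrix ρ ι ℝ} {c : Γ → ρ → ℝ}
  {z : X → ι → ℝ} {v : ρ → ℝ}

theorem dotProduct_sub_integral_eq (hg : AEMeasurable g μ) (hμ : μ.map g = π)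
    (hK : ∀ i j, MemLp (fun γ => K γ i j) 2 π) (hc : ∀ i, Integrable (fun γ => c γ i) π)
    (hz : ∀ j, MemLp (fun x => z x j) 2 μ)
    (hv : ∀ i, ∫ x, (c (g x) + K (g x) *ᵥ z x) i ∂μ = v i) (w : ρ → ℝ) :
    w ⬝ᵥ (v - fun i => ∫ γ, c γ i ∂π) = ∫ x, (w ᵥ* K (g x)) ⬝ᵥ z x ∂μ := by
  subst hμ
  have hKg : ∀ i j, MemLp (fun x => K (g x) i j) 2 μ := fun i j => (hK i j).comp_of_map hg
  have hdrift : (v - fun i => ∫ γ, c γ i ∂μ.map g) = fun i => ∫ x, (K (g x) *ᵥ z x) i ∂μ := by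
    ext i
    have hcg : Integrable (fun x => c (g x) i) μ := (hc i).comp_aemeasurable hg
    have hKz : Integrable (fun x => (K (g x) *ᵥ z x) i) μ := integrable_dotProduct (hKg i) hz
    rw [Pi.sub_apply, ← hv i, integral_map hg (hc i).1]
    simp only [Pi.add_apply]
    rw [integral_add hcg hKz, add_sub_cancel_left]
  rw [hdrift, dotProduct_integral_mulVec hKg hz]

theorem exists_gramMatrix_mulVec_eq (hg : AEMeasurable g μ) (hμ : μ.map g = π)
    (hK : ∀ i j, MemLp (fun γ => K γ i j) 2 π) (hc : ∀ i, Integrable (fun γ => c γ i) π)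
    (hz : ∀ j, MemLp (fun x => z x j) 2 μ)
    (hv : ∀ i, ∫ x, (c (g x) + K (g x) *ᵥ z x) i ∂μ = v i) :
    ∃ η, gramMatrix π K *ᵥ η = v - fun i => ∫ γ, c γ i ∂π := by
  classical
  refine gramMatrix_isHermitian.exists_mulVec_eq_of_dotProduct_eq_zero fun w hw => ?_
  have hvanish : ∀ᵐ γ ∂π, w ᵥ* K γ = 0 := by
    have h := dotProduct_gramMatrix_mulVec hK w
    rw [hw, dotProduct_zero, eq_comm, integral_eq_zero_iff_of_nonneg
      (fun γ => by simpa using dotProduct_star_self_nonneg (w ᵥ* K γ))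
      (integrable_dotProduct (memLp_vecMul_apply hK w) (memLp_vecMul_apply hK w))] at h
    filter_upwards [h] with γ hγ using dotProduct_self_eq_zero.mp hγ
  subst hμ
  rw [dotProduct_sub_integral_eq hg rfl hK hc hz hv w, integral_eq_zero_of_ae]
  filter_upwards [ae_of_ae_map hg hvanish] with x hx
  simp [hx]

theorem dotProduct_le_integral_dotProduct_self (hg : AEMeasurable g μ) (hμ : μ.map g = π)
    (hK : ∀ i j, MemLp (fun γ => K γ i j) 2 π) (hc : ∀ i, Integrable (fun γ => c γ i) π)
    (hz : ∀ j, MemLp (fun x => z x j) 2 μ)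
    (hv : ∀ i, ∫ x, (c (g x) + K (g x) *ᵥ z x) i ∂μ = v i) {η : ρ → ℝ}
    (hη : gramMatrix π K *ᵥ η = v - fun i => ∫ γ, c γ i ∂π) :
    η ⬝ᵥ (v - fun i => ∫ γ, c γ i ∂π) ≤ ∫ x, z x ⬝ᵥ z x ∂μ := by
  subst hμ
  have hu : ∀ j, MemLp (fun x => (η ᵥ* K (g x)) j) 2 μ :=
    fun j => (memLp_vecMul_apply hK η j).comp_of_map hg
  set u : X → ι → ℝ := fun x => η ᵥ* K (g x)
  have hpair : ∫ x, u x ⬝ᵥ z x ∂μ = η ⬝ᵥ (v - fun i => ∫ γ, c γ i ∂μ.map g) :=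
    (dotProduct_sub_integral_eq hg rfl hK hc hz hv η).symm
  have hnorm : ∫ x, u x ⬝ᵥ u x ∂μ = η ⬝ᵥ (v - fun i => ∫ γ, c γ i ∂μ.map g) := by
    rw [← hη, dotProduct_gramMatrix_mulVec hK, integral_map hg]
    exact (integrable_dotProduct (memLp_vecMul_apply hK η) (memLp_vecMul_apply hK η)).1
  have huz : Integrable (fun x => 2 * (u x ⬝ᵥ z x)) μ := (integrable_dotProduct hu hz).const_mul 2
  have huu : Integrable (fun x => u x ⬝ᵥ u x) μ := integrable_dotProduct hu hu
  calc η ⬝ᵥ (v - fun i => ∫ γ, c γ i ∂μ.map g)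
      = 2 * ∫ x, u x ⬝ᵥ z x ∂μ - ∫ x, u x ⬝ᵥ u x ∂μ := by rw [hpair, hnorm]; ring
    _ = ∫ x, (2 * (u x ⬝ᵥ z x) - u x ⬝ᵥ u x) ∂μ := by
      rw [integral_sub huz huu, integral_const_mul]
    _ ≤ ∫ x, z x ⬝ᵥ z x ∂μ := integral_mono (huz.sub huu) (integrable_dotProduct hz hz)
      fun x => two_mul_dotProduct_sub_le (u x) (z x)

end Duality

section LocalRate

variable {Γ : Type*} [MeasurableSpace Γ] (π : Measure Γ) {m n : ℕ}
  (κ1 κ2 : Γ → Matrix (Fin m) (Fin n) ℝ) (c : Γ → Fin m → ℝ) (v : Fin m → ℝ)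

def relaxedCosts : Set ℝ :=
  { a : ℝ | ∃ P : Measure ((Fin n → ℝ) × (Fin n → ℝ) × Γ),
        IsProbabilityMeasure P ∧
        P.map (fun p => p.2.2) = π ∧
        Integrable (fun p : (Fin n → ℝ) × (Fin n → ℝ) × Γ =>
          (∑ i, (p.1 i) ^ 2) + ∑ i, (p.2.1 i) ^ 2) P ∧
        (∀ i, (∫ p : (Fin n → ℝ) × (Fin n → ℝ) × Γ,
            (c p.2.2 + κ1 p.2.2 *ᵥ p.1 + κ2 p.2.2 *ᵥ p.2.1) i ∂P) = v i) ∧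
        a = (1 / 2) * ∫ p : (Fin n → ℝ) × (Fin n → ℝ) × Γ,
          ((∑ i, (p.1 i) ^ 2) + ∑ i, (p.2.1 i) ^ 2) ∂P }

def ordinaryCosts : Set ℝ :=
  { a : ℝ | ∃ u1 u2 : Γ → Fin n → ℝ,
        (∀ i, Measurable fun γ => u1 γ i) ∧
        (∀ i, Measurable fun γ => u2 γ i) ∧
        (∀ i, MemLp (fun γ => u1 γ i) 2 π) ∧
        (∀ i, MemLp (fun γ => u2 γ i) 2 π) ∧
        (∀ i, (∫ γ, (c γ + κ1 γ *ᵥ u1 γ + κ2 γ *ᵥ u2 γ) i ∂π) = v i) ∧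
        a = (1 / 2) * ∫ γ, ((∑ i, (u1 γ i) ^ 2) + ∑ i, (u2 γ i) ^ 2) ∂π }

variable {π κ1 κ2 c v}

theorem ordinaryCosts_subset_relaxedCosts [IsProbabilityMeasure π]
    (hκ1meas : ∀ i j, Measurable fun γ => κ1 γ i j)
    (hκ2meas : ∀ i j, Measurable fun γ => κ2 γ i j)
    (hcmeas : ∀ i, Measurable fun γ => c γ i) :
    ordinaryCosts π κ1 κ2 c v ⊆ relaxedCosts π κ1 κ2 c v := by
  rintro a ⟨u1, u2, hu1m, hu2m, hu1, hu2, hv, rfl⟩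
  have hφ : Measurable fun γ => (u1 γ, u2 γ, γ) :=
    (measurable_pi_lambda _ hu1m).prodMk ((measurable_pi_lambda _ hu2m).prodMk measurable_id)
  have hcost : Measurable fun p : (Fin n → ℝ) × (Fin n → ℝ) × Γ =>
      (∑ i, (p.1 i) ^ 2) + ∑ i, (p.2.1 i) ^ 2 := by fun_prop
  have hdrift : ∀ i, Measurable fun p : (Fin n → ℝ) × (Fin n → ℝ) × Γ =>
      (c p.2.2 + κ1 p.2.2 *ᵥ p.1 + κ2 p.2.2 *ᵥ p.2.1) i := fun i => by
    simp only [Pi.add_apply, mulVec, dotProduct]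
    fun_prop
  refine ⟨π.map fun γ => (u1 γ, u2 γ, γ), Measure.isProbabilityMeasure_map hφ.aemeasurable,
    ?_, ?_, fun i => ?_, ?_⟩
  · rw [Measure.map_map (by fun_prop) hφ]
    exact Measure.map_id
  · rw [integrable_map_measure hcost.aestronglyMeasurable hφ.aemeasurable]
    exact (integrable_finsetSum _ fun j _ => (hu1 j).integrable_sq).add
      (integrable_finsetSum _ fun j _ => (hu2 j).integrable_sq)
  · rw [integral_map hφ.aemeasurable (hdrift i).aestronglyMeasurable]
    exact hv i
  · rw [integral_map hφ.aemeasurable hcost.aestronglyMeasurable]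

theorem mem_ordinaryCosts
    (hκ1meas : ∀ i j, Measurable fun γ => κ1 γ i j)
    (hκ2meas : ∀ i j, Measurable fun γ => κ2 γ i j)
    (hK : ∀ i j, MemLp (fun γ => fromCols (κ1 γ) (κ2 γ) i j) 2 π)
    (hc : ∀ i, Integrable (fun γ => c γ i) π) {η : Fin m → ℝ}
    (hη : gramMatrix π (fun γ => fromCols (κ1 γ) (κ2 γ)) *ᵥ η = v - fun i => ∫ γ, c γ i ∂π) :
    1 / 2 * (η ⬝ᵥ (v - fun i => ∫ γ, c γ i ∂π)) ∈ ordinaryCosts π κ1 κ2 c v := by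
  have hu : ∀ j, MemLp (fun γ => (η ᵥ* fromCols (κ1 γ) (κ2 γ)) j) 2 π :=
    memLp_vecMul_apply hK η
  refine ⟨fun γ => η ᵥ* κ1 γ, fun γ => η ᵥ* κ2 γ, fun j => ?_, fun j => ?_,
    fun j => hu (.inl j), fun j => hu (.inr j), fun i => ?_, ?_⟩
  · simp only [vecMul, dotProduct]
    fun_prop
  · simp only [vecMul, dotProduct]
    fun_prop
  · have hKu : Integrable (fun γ => (fromCols (κ1 γ) (κ2 γ) *ᵥ
        (η ᵥ* fromCols (κ1 γ) (κ2 γ))) i) π := integrable_dotProduct (hK i) hu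
    have h := congrFun (gramMatrix_mulVec hK η) i
    simp only [hη, vecMul_fromCols, fromCols_mulVec_sumElim, Pi.add_apply, Pi.sub_apply]
      at h hKu
    simp only [Pi.add_apply, add_assoc]
    rw [integral_add (hc i) hKu, ← h, add_sub_cancel]
  · rw [← hη, dotProduct_gramMatrix_mulVec hK]
    simp only [vecMul_fromCols, sumElim_dotProduct_self]

/-- A pair of controls `(z₁, z₂)` is encoded as the single control `Sum.elim z₁ z₂` against
`fromCols κ₁ κ₂`. -/
theorem exists_control_of_mem_relaxedCosts {a : ℝ} (ha : a ∈ relaxedCosts π κ1 κ2 c v) :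
    ∃ P : Measure ((Fin n → ℝ) × (Fin n → ℝ) × Γ), P.map (fun p => p.2.2) = π ∧
      (∀ j, MemLp (fun p : (Fin n → ℝ) × (Fin n → ℝ) × Γ => Sum.elim p.1 p.2.1 j) 2 P) ∧
      (∀ i, ∫ p : (Fin n → ℝ) × (Fin n → ℝ) × Γ,
        (c p.2.2 + fromCols (κ1 p.2.2) (κ2 p.2.2) *ᵥ Sum.elim p.1 p.2.1) i ∂P = v i) ∧
      a = 1 / 2 * ∫ p : (Fin n → ℝ) × (Fin n → ℝ) × Γ,
        Sum.elim p.1 p.2.1 ⬝ᵥ Sum.elim p.1 p.2.1 ∂P := by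
  obtain ⟨P, -, hmarg, hint, hv, rfl⟩ := ha
  have hzm : ∀ j, AEStronglyMeasurable
      (fun p : (Fin n → ℝ) × (Fin n → ℝ) × Γ => Sum.elim p.1 p.2.1 j) P := by
    rintro (j | j)
    exacts [((measurable_pi_apply j).comp measurable_fst).aestronglyMeasurable,
      ((measurable_pi_apply j).comp measurable_snd.fst).aestronglyMeasurable]
  refine ⟨P, hmarg, memLp_two_of_integrable_dotProduct_self hzm ?_, fun i => ?_, ?_⟩
  · simpa only [sumElim_dotProduct_self] using hint
  · simpa only [fromCols_mulVec_sumElim, add_assoc] using hv i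
  · simp only [sumElim_dotProduct_self]

end LocalRate

theorem relaxed_eq_ordinary_local_rate_general
    {Γ : Type*} [MeasurableSpace Γ]
    (π : Measure Γ) [IsProbabilityMeasure π]
    (m n : ℕ)
    (κ1 κ2 : Γ → Matrix (Fin m) (Fin n) ℝ)
    (hκ1meas : ∀ i j, Measurable fun γ => κ1 γ i j)
    (hκ2meas : ∀ i j, Measurable fun γ => κ2 γ i j)
    (hκ1 : ∀ i j, MemLp (fun γ => κ1 γ i j) 2 π)
    (hκ2 : ∀ i j, MemLp (fun γ => κ2 γ i j) 2 π)
    (c : Γ → Fin m → ℝ)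
    (hcmeas : ∀ i, Measurable fun γ => c γ i)
    (hcint : ∀ i, Integrable (fun γ => c γ i) π)
    (v : Fin m → ℝ) :
    sInf { a : ℝ | ∃ P : Measure ((Fin n → ℝ) × (Fin n → ℝ) × Γ),
        IsProbabilityMeasure P ∧
        P.map (fun p => p.2.2) = π ∧
        Integrable (fun p : (Fin n → ℝ) × (Fin n → ℝ) × Γ =>
          (∑ i, (p.1 i) ^ 2) + ∑ i, (p.2.1 i) ^ 2) P ∧
        (∀ i, (∫ p : (Fin n → ℝ) × (Fin n → ℝ) × Γ,
            (c p.2.2 + κ1 p.2.2 *ᵥ p.1 + κ2 p.2.2 *ᵥ p.2.1) i ∂P) = v i) ∧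
        a = (1 / 2) * ∫ p : (Fin n → ℝ) × (Fin n → ℝ) × Γ,
          ((∑ i, (p.1 i) ^ 2) + ∑ i, (p.2.1 i) ^ 2) ∂P }
    = sInf { a : ℝ | ∃ u1 u2 : Γ → Fin n → ℝ,
        (∀ i, Measurable fun γ => u1 γ i) ∧
        (∀ i, Measurable fun γ => u2 γ i) ∧
        (∀ i, MemLp (fun γ => u1 γ i) 2 π) ∧
        (∀ i, MemLp (fun γ => u2 γ i) 2 π) ∧
        (∀ i, (∫ γ, (c γ + κ1 γ *ᵥ u1 γ + κ2 γ *ᵥ u2 γ) i ∂π) = v i) ∧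
        a = (1 / 2) * ∫ γ, ((∑ i, (u1 γ i) ^ 2) + ∑ i, (u2 γ i) ^ 2) ∂π } := by
  change sInf (relaxedCosts π κ1 κ2 c v) = sInf (ordinaryCosts π κ1 κ2 c v)
  have hsub : ordinaryCosts π κ1 κ2 c v ⊆ relaxedCosts π κ1 κ2 c v :=
    ordinaryCosts_subset_relaxedCosts hκ1meas hκ2meas hcmeas
  rcases (relaxedCosts π κ1 κ2 c v).eq_empty_or_nonempty with hempty | ⟨a, ha⟩
  · rw [hempty, Set.subset_empty_iff.mp (hsub.trans hempty.subset)]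
  have hK : ∀ i j, MemLp (fun γ => fromCols (κ1 γ) (κ2 γ) i j) 2 π := by
    rintro i (j | j)
    exacts [hκ1 i j, hκ2 i j]
  have hproj : Measurable fun p : (Fin n → ℝ) × (Fin n → ℝ) × Γ => p.2.2 := measurable_snd.snd
  obtain ⟨P, hmarg, hz, hv, -⟩ := exists_control_of_mem_relaxedCosts ha
  obtain ⟨η, hη⟩ := exists_gramMatrix_mulVec_eq hproj.aemeasurable hmarg hK hcint hz hv
  have hleast : IsLeast (relaxedCosts π κ1 κ2 c v)
      (1 / 2 * (η ⬝ᵥ (v - fun i => ∫ γ, c γ i ∂π))) := by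
    refine ⟨hsub (mem_ordinaryCosts hκ1meas hκ2meas hK hcint hη), fun b hb => ?_⟩
    obtain ⟨Q, hmarg', hz', hv', rfl⟩ := exists_control_of_mem_relaxedCosts hb
    have := dotProduct_le_integral_dotProduct_self hproj.aemeasurable hmarg' hK hcint hz' hv' hη
    linarith
  rw [hleast.csInf_eq, IsLeast.csInf_eq
    ⟨mem_ordinaryCosts hκ1meas hκ2meas hK hcint hη, fun b hb => hleast.2 (hsub hb)⟩]

/-- Equality of the relaxed and ordinary formulations of the local rate
function: the infimum of `½∫(‖z₁‖²+‖z₂‖²)dP` over relaxed controls (probability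
measures on `ℝⁿ × ℝⁿ × Γ` with `Γ`-marginal `π`, finite second moments and mean
drift `v`) equals the infimum of `½E^π[‖u₁‖²+‖u₂‖²]` over ordinary
square-integrable controls with mean drift `v`. -/
theorem relaxed_eq_ordinary_local_rate
    {Γ : Type*} [MeasurableSpace Γ] [StandardBorelSpace Γ]
    (π : Measure Γ) [IsProbabilityMeasure π]
    (m n : ℕ) (hm : 0 < m) (hn : 0 < n)
    (κ1 κ2 : Γ → Matrix (Fin m) (Fin n) ℝ)
    (hκ1meas : ∀ i j, Measurable fun γ => κ1 γ i j)
    (hκ2meas : ∀ i j, Measurable fun γ => κ2 γ i j)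
    (hκ1 : ∀ i j, MemLp (fun γ => κ1 γ i j) 2 π)
    (hκ2 : ∀ i j, MemLp (fun γ => κ2 γ i j) 2 π)
    (c : Γ → Fin m → ℝ)
    (hcmeas : ∀ i, Measurable fun γ => c γ i)
    (hcint : ∀ i, Integrable (fun γ => c γ i) π)
    (v : Fin m → ℝ) :
    sInf { a : ℝ | ∃ P : Measure ((Fin n → ℝ) × (Fin n → ℝ) × Γ),
        IsProbabilityMeasure P ∧
        P.map (fun p => p.2.2) = π ∧
        Integrable (fun p : (Fin n → ℝ) × (Fin n → ℝ) × Γ =>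
          (∑ i, (p.1 i) ^ 2) + ∑ i, (p.2.1 i) ^ 2) P ∧
        (∀ i, (∫ p : (Fin n → ℝ) × (Fin n → ℝ) × Γ,
            (c p.2.2 + κ1 p.2.2 *ᵥ p.1 + κ2 p.2.2 *ᵥ p.2.1) i ∂P) = v i) ∧
        a = (1 / 2) * ∫ p : (Fin n → ℝ) × (Fin n → ℝ) × Γ,
          ((∑ i, (p.1 i) ^ 2) + ∑ i, (p.2.1 i) ^ 2) ∂P }
    = sInf { a : ℝ | ∃ u1 u2 : Γ → Fin n → ℝ,
        (∀ i, Measurable fun γ => u1 γ i) ∧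
        (∀ i, Measurable fun γ => u2 γ i) ∧
        (∀ i, MemLp (fun γ => u1 γ i) 2 π) ∧
        (∀ i, MemLp (fun γ => u2 γ i) 2 π) ∧
        (∀ i, (∫ γ, (c γ + κ1 γ *ᵥ u1 γ + κ2 γ *ᵥ u2 γ) i ∂π) = v i) ∧
        a = (1 / 2) * ∫ γ, ((∑ i, (u1 γ i) ^ 2) + ∑ i, (u2 γ i) ^ 2) ∂π } :=
  relaxed_eq_ordinary_local_rate_general π m n κ1 κ2 hκ1meas hκ2meas hκ1 hκ2 c hcmeas hcint v
end

section
/- Let $(\Gamma, \mathcal{G}, \pi)$ be a standard Borel probability space, $m, n$ positive integers, $\kappa_1, \kappa_2 : \Gamma \to \mathbb{R}^{m \times n}$ square-integrable, and $c : \Gamma \to \mathbb{R}^{m}$ integrable. Assume $q = \mathrm{E}^{\pi}[\kappa_1\kappa_1^{T}+\kappa_2\kappa_2^{T}]$ is invertible and set $\bar c = \mathrm{E}^{\pi}[c]$. Then for every $v\in\mathbb{R}^{m}$, the relaxed value $L^{r}(v) = \inf \tfrac12\int(\|z_1\|^2+\|z_2\|^2)dP$ — the infimum over probability measures $P$ on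 $\mathbb{R}^{n}\times\mathbb{R}^{n}\times\Gamma$ with $\Gamma$-marginal $\pi$, finite second moments, and $\int(c+\kappa_1 z_1+\kappa_2 z_2)dP = v$ — equals $\tfrac12 (v - \bar c)^{T} q^{-1} (v - \bar c)$. -/
/-!
Weak duality. For every `l`, pointwise `2 l ⬝ (κ₁ z₁ + κ₂ z₂) ≤ |κ₁ᵀ l|² + |κ₂ᵀ l|² + |z₁|² + |z₂|²`,
and integrating against a relaxed control with mean drift `v` gives
`2 l ⬝ (v - c̄) - lᵀ q l ≤ ∫ (|z₁|² + |z₂|²) dP`. For `l = q⁻¹ (v - c̄)` the left side is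
`(v - c̄)ᵀ q⁻¹ (v - c̄)`, and this value is attained by the deterministic feedback control
`zₖ = κₖᵀ l`, whose mean drift is `c̄ + q l = v` and whose energy is `lᵀ q l`.
-/

open MeasureTheory Matrix

section Algebra

variable {R ι η : Type*} [CommRing R] [Fintype ι] [Fintype η]

lemma sum_sq_transpose_mulVec (A : Matrix ι η R) (l : ι → R) :
    ∑ j, (Aᵀ *ᵥ l) j ^ 2 = l ⬝ᵥ ((A * Aᵀ) *ᵥ l) := by
  rw [← mulVec_mulVec, dotProduct_mulVec, ← mulVec_transpose]
  simp only [dotProduct, sq]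

variable [LinearOrder R] [IsStrictOrderedRing R]

lemma sq_le_sum_sq_add (x : η → R) {s : R} (hs : 0 ≤ s) (j : η) :
    x j ^ 2 ≤ ∑ i, x i ^ 2 + s :=
  le_add_of_le_of_nonneg (Finset.single_le_sum (fun i _ => sq_nonneg (x i)) (Finset.mem_univ j)) hs

lemma two_mul_dotProduct_le_sum_sq (a b : η → R) :
    2 * (a ⬝ᵥ b) ≤ ∑ j, a j ^ 2 + ∑ j, b j ^ 2 := by
  simp only [dotProduct, Finset.mul_sum, ← Finset.sum_add_distrib, ← mul_assoc]
  exact Finset.sum_le_sum fun j _ => two_mul_le_add_sq (a j) (b j)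

lemma two_mul_dotProduct_mulVec_le (A : Matrix ι η R) (l : ι → R) (z : η → R) :
    2 * (l ⬝ᵥ (A *ᵥ z)) ≤ l ⬝ᵥ ((A * Aᵀ) *ᵥ l) + ∑ j, z j ^ 2 := by
  rw [← sum_sq_transpose_mulVec, dotProduct_mulVec, ← mulVec_transpose]
  exact two_mul_dotProduct_le_sum_sq _ _

lemma two_mul_dotProduct_mulVec_add_mulVec_le (A B : Matrix ι η R) (l : ι → R) (y z : η → R) :
    2 * (l ⬝ᵥ (A *ᵥ y + B *ᵥ z)) ≤
      l ⬝ᵥ ((A * Aᵀ + B * Bᵀ) *ᵥ l) + (∑ j, y j ^ 2 + ∑ j, z j ^ 2) := by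
  rw [dotProduct_add, add_mulVec, dotProduct_add]
  linarith [two_mul_dotProduct_mulVec_le A l y, two_mul_dotProduct_mulVec_le B l z]

end Algebra

section Integral

variable {Ω ι η : Type*} [MeasurableSpace Ω] {μ : Measure Ω} [Fintype η]

lemma integrable_dotProduct_s5 (l : η → ℝ) {f : Ω → η → ℝ}
    (hf : ∀ i, Integrable (fun ω => f ω i) μ) : Integrable (fun ω => l ⬝ᵥ f ω) μ :=
  integrable_finsetSum _ fun i _ => (hf i).const_mul (l i)

lemma integral_dotProduct (l : η → ℝ) {f : Ω → η → ℝ}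
    (hf : ∀ i, Integrable (fun ω => f ω i) μ) :
    ∫ ω, l ⬝ᵥ f ω ∂μ = l ⬝ᵥ fun i => ∫ ω, f ω i ∂μ := by
  simp only [dotProduct]
  rw [integral_finsetSum _ fun i _ => (hf i).const_mul (l i)]
  simp only [integral_const_mul]

lemma integrable_mulVec_apply {M : Ω → Matrix ι η ℝ}
    (hM : ∀ i j, Integrable (fun ω => M ω i j) μ) (l : η → ℝ) (i : ι) :
    Integrable (fun ω => (M ω *ᵥ l) i) μ := by
  simp only [mulVec, dotProduct_comm _ l]
  exact integrable_dotProduct_s5 l (hM i)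

lemma integral_mulVec_apply {M : Ω → Matrix ι η ℝ} {q : Matrix ι η ℝ}
    (hM : ∀ i j, Integrable (fun ω => M ω i j) μ) (hq : ∀ i j, q i j = ∫ ω, M ω i j ∂μ)
    (l : η → ℝ) (i : ι) :
    ∫ ω, (M ω *ᵥ l) i ∂μ = (q *ᵥ l) i := by
  simp only [mulVec, dotProduct_comm _ l]
  rw [integral_dotProduct l (hM i)]
  simp only [hq]

lemma integral_dotProduct_mulVec {M : Ω → Matrix η η ℝ} {q : Matrix η η ℝ}
    (hM : ∀ i j, Integrable (fun ω => M ω i j) μ) (hq : ∀ i j, q i j = ∫ ω, M ω i j ∂μ)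
    (l : η → ℝ) :
    ∫ ω, l ⬝ᵥ (M ω *ᵥ l) ∂μ = l ⬝ᵥ (q *ᵥ l) := by
  rw [integral_dotProduct l (integrable_mulVec_apply hM l)]
  simp only [integral_mulVec_apply hM hq]

lemma integrable_mulVec_apply_of_memLp_two {A : Ω → Matrix ι η ℝ} {x : Ω → η → ℝ}
    (hA : ∀ i j, MemLp (fun ω => A ω i j) 2 μ) (hx : ∀ j, MemLp (fun ω => x ω j) 2 μ) (i : ι) :
    Integrable (fun ω => (A ω *ᵥ x ω) i) μ :=
  integrable_finsetSum _ fun j _ => (hA i j).integrable_mul (hx j)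

lemma integrable_mul_transpose_apply {A : Ω → Matrix ι η ℝ}
    (hA : ∀ i j, MemLp (fun ω => A ω i j) 2 μ) (i k : ι) :
    Integrable (fun ω => (A ω * (A ω)ᵀ) i k) μ :=
  integrable_mulVec_apply_of_memLp_two hA (hA k) i

lemma memLp_two_of_sq_le {f g : Ω → ℝ} (hf : AEStronglyMeasurable f μ) (hg : Integrable g μ)
    (hfg : ∀ ω, f ω ^ 2 ≤ g ω) : MemLp f 2 μ :=
  (memLp_two_iff_integrable_sq hf).2 <| hg.mono' (hf.pow 2) <| ae_of_all _ fun ω => by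
    simpa [abs_of_nonneg (sq_nonneg (f ω))] using hfg ω

end Integral

lemma measurableEmbedding_prodMk_self {α β : Type*} [MeasurableSpace α] [MeasurableSpace β]
    [MeasurableEq β] {g : α → β} (hg : Measurable g) : MeasurableEmbedding fun a => (g a, a) := by
  refine .of_measurable_inverse (hg.prodMk measurable_id) ?_ measurable_snd fun a => rfl
  convert measurableSet_eq_fun (hg.comp measurable_snd) measurable_fst using 1
  exact Set.ext fun p => ⟨by rintro ⟨a, rfl⟩; rfl, fun h => ⟨p.2, Prod.ext h rfl⟩⟩

lemma measurable_transpose_mulVec {Γ ι η : Type*} [MeasurableSpace Γ] [Fintype ι]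
    {κ : Γ → Matrix ι η ℝ} (hκ : ∀ i j, Measurable fun γ => κ γ i j)
    (l : ι → ℝ) : Measurable fun γ => (κ γ)ᵀ *ᵥ l :=
  measurable_pi_lambda _ fun j => Finset.measurable_fun_sum _ fun i _ => (hκ i j).mul_const (l i)

def relaxedControlCosts {Γ ι η : Type*} [MeasurableSpace Γ] [Fintype η] (π : Measure Γ)
    (κ1 κ2 : Γ → Matrix ι η ℝ) (c : Γ → ι → ℝ) (v : ι → ℝ) : Set ℝ :=
  { a : ℝ | ∃ P : Measure ((η → ℝ) × (η → ℝ) × Γ),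
        IsProbabilityMeasure P ∧
        P.map (fun p => p.2.2) = π ∧
        Integrable (fun p : (η → ℝ) × (η → ℝ) × Γ =>
          (∑ i, (p.1 i) ^ 2) + ∑ i, (p.2.1 i) ^ 2) P ∧
        (∀ i, (∫ p : (η → ℝ) × (η → ℝ) × Γ,
            (c p.2.2 + κ1 p.2.2 *ᵥ p.1 + κ2 p.2.2 *ᵥ p.2.1) i ∂P) = v i) ∧
        a = (1 / 2) * ∫ p : (η → ℝ) × (η → ℝ) × Γ,
          ((∑ i, (p.1 i) ^ 2) + ∑ i, (p.2.1 i) ^ 2) ∂P }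

section RelaxedControl

variable {Γ ι η : Type*} [MeasurableSpace Γ] [Fintype η] {κ1 κ2 : Γ → Matrix ι η ℝ}

lemma integrable_drift_apply {P : Measure ((η → ℝ) × (η → ℝ) × Γ)}
    (hκ1 : ∀ i j, MemLp (fun γ => κ1 γ i j) 2 (P.map fun p => p.2.2))
    (hκ2 : ∀ i j, MemLp (fun γ => κ2 γ i j) 2 (P.map fun p => p.2.2))
    (henergy : Integrable (fun p : (η → ℝ) × (η → ℝ) × Γ =>
      (∑ j, p.1 j ^ 2) + ∑ j, p.2.1 j ^ 2) P) (i : ι) :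
    Integrable (fun p : (η → ℝ) × (η → ℝ) × Γ => (κ1 p.2.2 *ᵥ p.1 + κ2 p.2.2 *ᵥ p.2.1) i) P := by
  have hproj : AEMeasurable (fun p : (η → ℝ) × (η → ℝ) × Γ => p.2.2) P := by fun_prop
  have hz1 : ∀ j, MemLp (fun p : (η → ℝ) × (η → ℝ) × Γ => p.1 j) 2 P := fun j =>
    memLp_two_of_sq_le (Measurable.aestronglyMeasurable (by fun_prop)) henergy fun p =>
      sq_le_sum_sq_add _ (by positivity) j
  have hz2 : ∀ j, MemLp (fun p : (η → ℝ) × (η → ℝ) × Γ => p.2.1 j) 2 P := fun j =>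
    memLp_two_of_sq_le (Measurable.aestronglyMeasurable (by fun_prop)) henergy fun p => by
      rw [add_comm]
      exact sq_le_sum_sq_add _ (by positivity) j
  exact (integrable_mulVec_apply_of_memLp_two (fun i j => (hκ1 i j).comp_of_map hproj) hz1 i).add
    (integrable_mulVec_apply_of_memLp_two (fun i j => (hκ2 i j).comp_of_map hproj) hz2 i)

variable [Fintype ι] {π : Measure Γ} {c : Γ → ι → ℝ} {q : Matrix ι ι ℝ}

lemma two_mul_dotProduct_le_of_mem_relaxedControlCosts
    (hκ1 : ∀ i j, MemLp (fun γ => κ1 γ i j) 2 π) (hκ2 : ∀ i j, MemLp (fun γ => κ2 γ i j) 2 π)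
    (hc : ∀ i, Integrable (fun γ => c γ i) π)
    (hq : ∀ i j, q i j = ∫ γ, ((κ1 γ * (κ1 γ)ᵀ) i j + (κ2 γ * (κ2 γ)ᵀ) i j) ∂π)
    (l : ι → ℝ) {v : ι → ℝ} {a : ℝ} (ha : a ∈ relaxedControlCosts π κ1 κ2 c v) :
    2 * (l ⬝ᵥ (v - fun i => ∫ γ, c γ i ∂π)) ≤ l ⬝ᵥ (q *ᵥ l) + 2 * a := by
  obtain ⟨P, -, rfl, henergy, hmean, rfl⟩ := ha
  have hproj : Measurable fun p : (η → ℝ) × (η → ℝ) × Γ => p.2.2 := by fun_prop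
  have hdrift := integrable_drift_apply hκ1 hκ2 henergy
  have hmean_drift : ∀ i, ∫ p, (κ1 p.2.2 *ᵥ p.1 + κ2 p.2.2 *ᵥ p.2.1) i ∂P =
      (v - fun i => ∫ γ, c γ i ∂(P.map fun p => p.2.2)) i := by
    intro i
    have hcP : Integrable (fun p : (η → ℝ) × (η → ℝ) × Γ => c p.2.2 i) P :=
      (hc i).comp_measurable hproj
    rw [Pi.sub_apply, ← hmean i, integral_map hproj.aemeasurable (hc i).aestronglyMeasurable,
      eq_sub_iff_add_eq, ← integral_add (hdrift i) hcP]
    refine integral_congr_ae (ae_of_all _ fun p => ?_)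
    simp only [Pi.add_apply]
    ring
  have hM : ∀ i j, Integrable (fun γ => (κ1 γ * (κ1 γ)ᵀ + κ2 γ * (κ2 γ)ᵀ) i j)
      (P.map fun p => p.2.2) := fun i j =>
    (integrable_mul_transpose_apply hκ1 i j).add (integrable_mul_transpose_apply hκ2 i j)
  have hquad := integrable_dotProduct_s5 l (integrable_mulVec_apply hM l)
  have hquadP : Integrable (fun p : (η → ℝ) × (η → ℝ) × Γ =>
      l ⬝ᵥ ((κ1 p.2.2 * (κ1 p.2.2)ᵀ + κ2 p.2.2 * (κ2 p.2.2)ᵀ) *ᵥ l)) P :=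
    hquad.comp_measurable hproj
  have hQ := integral_dotProduct_mulVec hM hq l
  rw [integral_map hproj.aemeasurable hquad.aestronglyMeasurable] at hQ
  calc 2 * (l ⬝ᵥ (v - fun i => ∫ γ, c γ i ∂(P.map fun p => p.2.2)))
      = ∫ p, 2 * (l ⬝ᵥ (κ1 p.2.2 *ᵥ p.1 + κ2 p.2.2 *ᵥ p.2.1)) ∂P := by
        rw [integral_const_mul, integral_dotProduct l hdrift]
        simp only [hmean_drift]
    _ ≤ ∫ p, (l ⬝ᵥ ((κ1 p.2.2 * (κ1 p.2.2)ᵀ + κ2 p.2.2 * (κ2 p.2.2)ᵀ) *ᵥ l) +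
          (∑ j, p.1 j ^ 2 + ∑ j, p.2.1 j ^ 2)) ∂P :=
        integral_mono ((integrable_dotProduct_s5 l hdrift).const_mul 2) (hquadP.add henergy)
          fun p => two_mul_dotProduct_mulVec_add_mulVec_le _ _ l _ _
    _ = l ⬝ᵥ (q *ᵥ l) + 2 * ((1 / 2) * ∫ p, (∑ j, p.1 j ^ 2 + ∑ j, p.2.1 j ^ 2) ∂P) := by
        rw [integral_add hquadP henergy, ← hQ]
        ring

end RelaxedControl

section Feedback

variable {Γ ι η : Type*} [Fintype ι] [Fintype η] {κ1 κ2 : Γ → Matrix ι η ℝ}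

def feedbackControl (κ1 κ2 : Γ → Matrix ι η ℝ) (l : ι → ℝ) (γ : Γ) : (η → ℝ) × (η → ℝ) × Γ :=
  ((κ1 γ)ᵀ *ᵥ l, (κ2 γ)ᵀ *ᵥ l, γ)

lemma energy_feedbackControl (l : ι → ℝ) (γ : Γ) :
    ∑ j, (feedbackControl κ1 κ2 l γ).1 j ^ 2 + ∑ j, (feedbackControl κ1 κ2 l γ).2.1 j ^ 2 =
      l ⬝ᵥ ((κ1 γ * (κ1 γ)ᵀ + κ2 γ * (κ2 γ)ᵀ) *ᵥ l) := by
  simp only [feedbackControl, sum_sq_transpose_mulVec, add_mulVec, dotProduct_add]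

variable [MeasurableSpace Γ] {π : Measure Γ} {c : Γ → ι → ℝ} {q : Matrix ι ι ℝ}

lemma measurableEmbedding_feedbackControl (hκ1 : ∀ i j, Measurable fun γ => κ1 γ i j)
    (hκ2 : ∀ i j, Measurable fun γ => κ2 γ i j) (l : ι → ℝ) :
    MeasurableEmbedding (feedbackControl κ1 κ2 l) :=
  (measurableEmbedding_prodMk_self ((measurable_transpose_mulVec hκ1 l).comp measurable_snd)).comp
    (measurableEmbedding_prodMk_self (measurable_transpose_mulVec hκ2 l))

lemma mem_relaxedControlCosts_feedbackControl [IsProbabilityMeasure π]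
    (hκ1meas : ∀ i j, Measurable fun γ => κ1 γ i j) (hκ2meas : ∀ i j, Measurable fun γ => κ2 γ i j)
    (hκ1 : ∀ i j, MemLp (fun γ => κ1 γ i j) 2 π) (hκ2 : ∀ i j, MemLp (fun γ => κ2 γ i j) 2 π)
    (hc : ∀ i, Integrable (fun γ => c γ i) π)
    (hq : ∀ i j, q i j = ∫ γ, ((κ1 γ * (κ1 γ)ᵀ) i j + (κ2 γ * (κ2 γ)ᵀ) i j) ∂π) (l : ι → ℝ) :
    (1 / 2) * (l ⬝ᵥ (q *ᵥ l)) ∈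
      relaxedControlCosts π κ1 κ2 c ((fun i => ∫ γ, c γ i ∂π) + q *ᵥ l) := by
  have hf := measurableEmbedding_feedbackControl hκ1meas hκ2meas l
  have hM : ∀ i j, Integrable (fun γ => (κ1 γ * (κ1 γ)ᵀ + κ2 γ * (κ2 γ)ᵀ) i j) π := fun i j =>
    (integrable_mul_transpose_apply hκ1 i j).add (integrable_mul_transpose_apply hκ2 i j)
  refine ⟨π.map (feedbackControl κ1 κ2 l),
    Measure.isProbabilityMeasure_map hf.measurable.aemeasurable, ?_, ?_, fun i => ?_, ?_⟩
  · rw [Measure.map_map (by fun_prop) hf.measurable]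
    exact Measure.map_id
  · rw [hf.integrable_map_iff, Function.comp_def]
    simp only [energy_feedbackControl]
    exact integrable_dotProduct_s5 l (integrable_mulVec_apply hM l)
  · rw [hf.integral_map]
    simp only [feedbackControl, mulVec_mulVec, add_assoc, ← add_mulVec]
    simp only [Pi.add_apply]
    rw [integral_add (hc i) (integrable_mulVec_apply hM l i), integral_mulVec_apply hM hq]
  · rw [hf.integral_map]
    simp only [energy_feedbackControl]
    rw [integral_dotProduct_mulVec hM hq]

end Feedback

theorem relaxed_local_rate_explicit_general
    {Γ : Type*} [MeasurableSpace Γ]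
    (π : Measure Γ) [IsProbabilityMeasure π]
    (m n : ℕ)
    (κ1 κ2 : Γ → Matrix (Fin m) (Fin n) ℝ)
    (hκ1meas : ∀ i j, Measurable fun γ => κ1 γ i j)
    (hκ2meas : ∀ i j, Measurable fun γ => κ2 γ i j)
    (hκ1 : ∀ i j, MemLp (fun γ => κ1 γ i j) 2 π)
    (hκ2 : ∀ i j, MemLp (fun γ => κ2 γ i j) 2 π)
    (c : Γ → Fin m → ℝ)
    (hcint : ∀ i, Integrable (fun γ => c γ i) π)
    (q : Matrix (Fin m) (Fin m) ℝ)
    (hq : ∀ i j, q i j = ∫ γ, ((κ1 γ * (κ1 γ)ᵀ) i j + (κ2 γ * (κ2 γ)ᵀ) i j) ∂π)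
    (hqinv : IsUnit q.det)
    (cbar : Fin m → ℝ)
    (hcbar : ∀ i, cbar i = ∫ γ, c γ i ∂π)
    (v : Fin m → ℝ) :
    sInf { a : ℝ | ∃ P : Measure ((Fin n → ℝ) × (Fin n → ℝ) × Γ),
        IsProbabilityMeasure P ∧
        P.map (fun p => p.2.2) = π ∧
        Integrable (fun p : (Fin n → ℝ) × (Fin n → ℝ) × Γ =>
          (∑ i, (p.1 i) ^ 2) + ∑ i, (p.2.1 i) ^ 2) P ∧
        (∀ i, (∫ p : (Fin n → ℝ) × (Fin n → ℝ) × Γ,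
            (c p.2.2 + κ1 p.2.2 *ᵥ p.1 + κ2 p.2.2 *ᵥ p.2.1) i ∂P) = v i) ∧
        a = (1 / 2) * ∫ p : (Fin n → ℝ) × (Fin n → ℝ) × Γ,
          ((∑ i, (p.1 i) ^ 2) + ∑ i, (p.2.1 i) ^ 2) ∂P }
    = (1 / 2) * ((v - cbar) ⬝ᵥ (q⁻¹ *ᵥ (v - cbar))) := by
  obtain rfl : cbar = fun i => ∫ γ, c γ i ∂π := funext hcbar
  obtain ⟨l, rfl⟩ : ∃ l, v = (fun i => ∫ γ, c γ i ∂π) + q *ᵥ l :=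
    ⟨q⁻¹ *ᵥ (v - _), by rw [mulVec_mulVec, mul_nonsing_inv q hqinv, one_mulVec, add_sub_cancel]⟩
  rw [add_sub_cancel_left, mulVec_mulVec, nonsing_inv_mul q hqinv, one_mulVec, dotProduct_comm]
  refine IsLeast.csInf_eq
    ⟨mem_relaxedControlCosts_feedbackControl hκ1meas hκ2meas hκ1 hκ2 hcint hq l, fun a ha => ?_⟩
  have hdual := two_mul_dotProduct_le_of_mem_relaxedControlCosts hκ1 hκ2 hcint hq l ha
  rw [add_sub_cancel_left] at hdual
  linarith

/-- Explicit evaluation of the relaxed local rate function: when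
`q = E^π[κ₁κ₁ᵀ + κ₂κ₂ᵀ]` is invertible, the infimum of `½∫(‖z₁‖²+‖z₂‖²)dP`
over relaxed controls with mean drift `v` equals
`½ (v - c̄)ᵀ q⁻¹ (v - c̄)` where `c̄ = E^π[c]`. -/
theorem relaxed_local_rate_explicit
    {Γ : Type*} [MeasurableSpace Γ] [StandardBorelSpace Γ]
    (π : Measure Γ) [IsProbabilityMeasure π]
    (m n : ℕ) (hm : 0 < m) (hn : 0 < n)
    (κ1 κ2 : Γ → Matrix (Fin m) (Fin n) ℝ)
    (hκ1meas : ∀ i j, Measurable fun γ => κ1 γ i j)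
    (hκ2meas : ∀ i j, Measurable fun γ => κ2 γ i j)
    (hκ1 : ∀ i j, MemLp (fun γ => κ1 γ i j) 2 π)
    (hκ2 : ∀ i j, MemLp (fun γ => κ2 γ i j) 2 π)
    (c : Γ → Fin m → ℝ)
    (hcmeas : ∀ i, Measurable fun γ => c γ i)
    (hcint : ∀ i, Integrable (fun γ => c γ i) π)
    (q : Matrix (Fin m) (Fin m) ℝ)
    (hq : ∀ i j, q i j = ∫ γ, ((κ1 γ * (κ1 γ)ᵀ) i j + (κ2 γ * (κ2 γ)ᵀ) i j) ∂π)
    (hqinv : IsUnit q.det)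
    (cbar : Fin m → ℝ)
    (hcbar : ∀ i, cbar i = ∫ γ, c γ i ∂π)
    (v : Fin m → ℝ) :
    sInf { a : ℝ | ∃ P : Measure ((Fin n → ℝ) × (Fin n → ℝ) × Γ),
        IsProbabilityMeasure P ∧
        P.map (fun p => p.2.2) = π ∧
        Integrable (fun p : (Fin n → ℝ) × (Fin n → ℝ) × Γ =>
          (∑ i, (p.1 i) ^ 2) + ∑ i, (p.2.1 i) ^ 2) P ∧
        (∀ i, (∫ p : (Fin n → ℝ) × (Fin n → ℝ) × Γ,
            (c p.2.2 + κ1 p.2.2 *ᵥ p.1 + κ2 p.2.2 *ᵥ p.2.1) i ∂P) = v i) ∧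
        a = (1 / 2) * ∫ p : (Fin n → ℝ) × (Fin n → ℝ) × Γ,
          ((∑ i, (p.1 i) ^ 2) + ∑ i, (p.2.1 i) ^ 2) ∂P }
    = (1 / 2) * ((v - cbar) ⬝ᵥ (q⁻¹ *ᵥ (v - cbar))) :=
  relaxed_local_rate_explicit_general π m n κ1 κ2 hκ1meas hκ2meas hκ1 hκ2 c hcint q hq hqinv cbar
    hcbar v
end
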